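/- For every integer n ≥ 5 and every integer s ≥ 2, the graph C_5 + E_{n−5}, the disjoint union of a 5-cycle with n−5 isolated vertices, is (gn_s ≥ 3)-saturated; consequently, sat(n, gn_s ≥ 3) ≤ 5. -/

import Mathlib

open SimpleGraph

/-- A strategy for the guessing game on `G` with `s` colors: a family of guessing
functions, one per vertex, where each vertex's guess depends only on the colors
of the vertices in its (open) neighborhood. -/
def IsGuessingStrategy {V : Type*} (G : SimpleGraph V) (s : ℕ)
    (f : V → (V → Fin s) → Fin s) : Prop :=
  ∀ (v : V) (c₁ c₂ : V → Fin s), (∀ u, G.Adj v u → c₁ u = c₂ u) → f v c₁ = f v c₂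

/-- The maximum, over all strategies for the guessing game on `G` with `s` colors,
of the number of fixed points of the strategy (colorings where every vertex
guesses its own color correctly). -/
noncomputable def maxFixedPoints {V : Type*} (G : SimpleGraph V) (s : ℕ) : ℕ :=
  sSup {n : ℕ | ∃ f : V → (V → Fin s) → Fin s, IsGuessingStrategy G s f ∧
    n = Nat.card {c : V → Fin s // ∀ v, f v c = c v}}

/-- The guessing number of `G` with `s` colors: the logarithm base `s` of the
maximum number of fixed points of a strategy. -/
noncomputable def guessingNumber {V : Type*} (G : SimpleGraph V) (s : ℕ) : ℝ :=
  Real.logb s (maxFixedPoints G s)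

/-- The join `K_k ⊕ E_{n-k}`: the first `k` vertices form a clique and are joined
to all other vertices; the remaining `n - k` vertices form an independent set. -/
def cliqueJoinEmpty (n k : ℕ) : SimpleGraph (Fin n) :=
  SimpleGraph.fromRel (fun u _ => (u : ℕ) < k)

/-- The extremal number `ex(n, gn_s ≥ a)`: the maximum number of edges over all
graphs on `n` vertices whose guessing number with `s` colors is `< a`. -/
noncomputable def exGN (n s : ℕ) (a : ℝ) : ℕ :=
  sSup {m : ℕ | ∃ G : SimpleGraph (Fin n),
    guessingNumber G s < a ∧ m = Nat.card G.edgeSet}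

/-- `G` is `(gn_s ≥ a)`-saturated: `gn(G,s) < a` but adding any missing edge
raises the guessing number to at least `a`. -/
def GNSaturated {V : Type*} (G : SimpleGraph V) (s : ℕ) (a : ℝ) : Prop :=
  guessingNumber G s < a ∧
    ∀ u w : V, u ≠ w → ¬G.Adj u w →
      a ≤ guessingNumber (G ⊔ SimpleGraph.fromEdgeSet {s(u, w)}) s

/-- The saturation number `sat(n, gn_s ≥ a)`: the minimum number of edges over
all `(gn_s ≥ a)`-saturated graphs on `n` vertices. -/
noncomputable def satGN (n s : ℕ) (a : ℝ) : ℕ :=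
  sInf {m : ℕ | ∃ G : SimpleGraph (Fin n),
    GNSaturated G s a ∧ m = Nat.card G.edgeSet}

/-- The disjoint union `H + E_{n-h}` of a graph `H` on `h` vertices with `n - h`
isolated vertices, realized on `Fin n`. -/
def withIsolated {h : ℕ} (H : SimpleGraph (Fin h)) (n : ℕ) : SimpleGraph (Fin n) :=
  SimpleGraph.fromRel (fun u v =>
    ∃ (hu : (u : ℕ) < h) (hv : (v : ℕ) < h), H.Adj ⟨u, hu⟩ ⟨v, hv⟩)

/-- `K*_{a,a}`: the complete bipartite graph `K_{a,a}` with one subdivided edge.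
Vertices `0, …, a-1` are `x_1, …, x_a`; vertices `a, …, 2a-1` are `y_1, …, y_a`;
vertex `2a` is the subdivision vertex `v_0`, adjacent exactly to `x_1` and `y_1`.
The edge `x_1 y_1` is removed. -/
def Kstar (a : ℕ) : SimpleGraph (Fin (2 * a + 1)) :=
  SimpleGraph.fromRel (fun u v =>
    ((u : ℕ) < a ∧ a ≤ (v : ℕ) ∧ (v : ℕ) < 2 * a ∧ ¬((u : ℕ) = 0 ∧ (v : ℕ) = a)) ∨
    ((u : ℕ) = 2 * a ∧ ((v : ℕ) = 0 ∨ (v : ℕ) = a)))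

/-- Add `b` dominating vertices to a graph `H` on `m` vertices: the first `b`
vertices are adjacent to everything else (and each other), the remaining `m`
vertices induce a copy of `H`. -/
def withDominating {m : ℕ} (H : SimpleGraph (Fin m)) (b : ℕ) :
    SimpleGraph (Fin (b + m)) :=
  SimpleGraph.fromRel (fun u v =>
    (u : ℕ) < b ∨ (v : ℕ) < b ∨
      ∃ (hu : b ≤ (u : ℕ)) (hv : b ≤ (v : ℕ)),
        H.Adj ⟨(u : ℕ) - b, by have := u.isLt; omega⟩
          ⟨(v : ℕ) - b, by have := v.isLt; omega⟩)

/-- `F` is a minimal graph with `gn_s ≥ a`: its guessing number with `s` colors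
is at least `a`, but every proper subgraph has guessing number `< a`. -/
def MinimalGN {V : Type*} [Finite V] (F : SimpleGraph V) (s : ℕ) (a : ℝ) : Prop :=
  a ≤ guessingNumber F s ∧
    ∀ H : F.Subgraph, H ≠ ⊤ → guessingNumber H.coe s < a

/-!
Upper bound: `{v₁, v₃, v₄}` is a vertex cover of `C₅ + E_{n-5}`, so a fixed point is determined
by its colours there and there are at most `s³` of them. With exactly `s³`, every colouring of
`v₁, v₃, v₄` extends to a fixed point; since `N(v₀) = {v₁, v₄}`, `N(v₃) = {v₂, v₄}` and
`N(v₄) = {v₃, v₀}`, for each colour of `v₁` the colours of `N(v₁) = {v₀, v₂}` then take all `s²`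
values, so the guess of `v₁` cannot be right for two different colours of `v₁`.

Lower bound: adding an edge creates a triangle plus a disjoint edge, or three disjoint edges.
Vertex-disjoint cliques `K₁, …, Kₘ` give `s ^ (∑ |Kᵢ| - m)` fixed points: on each clique every
vertex guesses the colour making the sum over the clique vanish in `ℤ/s`.
-/

section GuessingGame

variable {V W ι : Type*} {G : SimpleGraph V} {s : ℕ}

abbrev FixedPoints (f : V → (V → Fin s) → Fin s) : Type _ :=
  {c : V → Fin s // ∀ v, f v c = c v}

theorem IsGuessingStrategy.eq_of_eqOn_neighbors {f : V → (V → Fin s) → Fin s}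
    (hf : IsGuessingStrategy G s f) {c c' : FixedPoints f} {v : V}
    (h : ∀ u, G.Adj v u → c.1 u = c'.1 u) : c.1 v = c'.1 v := by
  rw [← c.2 v, ← c'.2 v]
  exact hf v _ _ h

theorem bddAbove_card_fixedPoints [Finite V] :
    BddAbove {n : ℕ | ∃ f : V → (V → Fin s) → Fin s, IsGuessingStrategy G s f ∧
      n = Nat.card (FixedPoints f)} := by
  refine ⟨Nat.card (V → Fin s), ?_⟩
  rintro _ ⟨f, -, rfl⟩
  exact Nat.card_le_card_of_injective _ Subtype.val_injective

theorem card_fixedPoints_le_maxFixedPoints [Finite V] {f : V → (V → Fin s) → Fin s}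
    (hf : IsGuessingStrategy G s f) : Nat.card (FixedPoints f) ≤ maxFixedPoints G s :=
  le_csSup bddAbove_card_fixedPoints ⟨f, hf, rfl⟩

theorem exists_card_fixedPoints_eq_maxFixedPoints [Finite V] (G : SimpleGraph V) (s : ℕ)
    [NeZero s] : ∃ f, IsGuessingStrategy G s f ∧ Nat.card (FixedPoints f) = maxFixedPoints G s := by
  obtain ⟨f, hf, h⟩ := Nat.sSup_mem (s := {n : ℕ | ∃ f : V → (V → Fin s) → Fin s,
      IsGuessingStrategy G s f ∧ n = Nat.card (FixedPoints f)})
    ⟨_, fun _ _ => 0, fun _ _ _ _ => rfl, rfl⟩ bddAbove_card_fixedPoints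
  exact ⟨f, hf, h.symm⟩

open Finset in
theorem pow_card_sub_card_le_maxFixedPoints [Fintype V] [Fintype ι] [NeZero s] (p : V → ι)
    (hp : ∀ u v, u ≠ v → p u = p v → G.Adj u v) :
    s ^ (Fintype.card V - Fintype.card ι) ≤ maxFixedPoints G s := by
  classical
  let φ : (V → Fin s) →+ (ι → Fin s) :=
    AddMonoidHom.mk' (fun c i => ∑ u with p u = i, c u) fun c c' => by
      ext i; simp [sum_add_distrib]
  let f : V → (V → Fin s) → Fin s := fun v c => -∑ u ∈ ({u | p u = p v} : Finset V).erase v, c u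
  have hf : IsGuessingStrategy G s f := fun v c₁ c₂ h => by
    refine congrArg Neg.neg (sum_congr rfl fun u hu => h u ?_)
    obtain ⟨huv, hu⟩ := mem_erase.1 hu
    exact hp v u huv.symm (mem_filter.1 hu).2.symm
  have hker : ∀ c ∈ φ.ker, ∀ v, f v c = c v := fun c hc v => by
    have h0 : ∑ u with p u = p v, c u = 0 := congrFun hc (p v)
    rw [← add_sum_erase _ _
      (mem_filter.2 ⟨mem_univ v, rfl⟩ : v ∈ ({u | p u = p v} : Finset V))] at h0
    exact (eq_neg_of_add_eq_zero_left h0).symm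
  have hcard : Nat.card φ.ker * Nat.card φ.range = s ^ Fintype.card V := by
    rw [← AddSubgroup.index_ker, φ.ker.card_mul_index, Nat.card_fun, Nat.card_eq_fintype_card,
      Fintype.card_fin, Nat.card_eq_fintype_card]
  have hrange : Nat.card φ.range ≤ s ^ Fintype.card ι := by
    simpa [Nat.card_fun] using Nat.card_le_card_of_injective _ φ.range.subtype_injective
  calc s ^ (Fintype.card V - Fintype.card ι) ≤ Nat.card φ.ker := by
        rcases le_total (Fintype.card ι) (Fintype.card V) with h | h
        · refine Nat.le_of_mul_le_mul_right ?_ (pow_pos (NeZero.pos s) (Fintype.card ι))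
          rw [← pow_add, Nat.sub_add_cancel h, ← hcard]
          exact Nat.mul_le_mul_left _ hrange
        · rw [Nat.sub_eq_zero_of_le h, pow_zero, Nat.one_le_iff_ne_zero]
          exact Nat.card_ne_zero.2 ⟨⟨⟨0, φ.ker.zero_mem⟩⟩, inferInstance⟩
    _ ≤ Nat.card (FixedPoints f) :=
        Nat.card_le_card_of_injective (fun c => ⟨c.1, hker c.1 c.2⟩)
          fun c c' h => Subtype.ext (congrArg Subtype.val h :)
    _ ≤ maxFixedPoints G s := card_fixedPoints_le_maxFixedPoints hf

theorem maxFixedPoints_le_of_embedding [Finite W] [NeZero s] {G' : SimpleGraph W} (φ : G ↪g G') :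
    maxFixedPoints G s ≤ maxFixedPoints G' s := by
  refine csSup_le' ?_
  rintro _ ⟨f, hf, rfl⟩
  let F : W → (W → Fin s) → Fin s := fun w c =>
    Function.extend φ (fun v => f v (c ∘ φ)) (fun _ => 0) w
  have hF : IsGuessingStrategy G' s F := fun w c₁ c₂ h => by
    by_cases hw : ∃ v, φ v = w
    · obtain ⟨v, rfl⟩ := hw
      simp only [F, φ.injective.extend_apply]
      exact hf v _ _ fun u hu => h (φ u) (φ.map_adj_iff.2 hu)
    · simp only [F, Function.extend_apply' _ _ _ hw]
  have hfix : ∀ c : FixedPoints f, ∀ w, F w (Function.extend φ c.1 0) = Function.extend φ c.1 0 w :=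
    fun c w => by
      by_cases hw : ∃ v, φ v = w
      · obtain ⟨v, rfl⟩ := hw
        simp only [F, φ.injective.extend_apply, Function.extend_comp φ.injective, c.2 v]
      · simp only [F, Function.extend_apply' _ _ _ hw, Pi.zero_apply]
  calc Nat.card (FixedPoints f) ≤ Nat.card (FixedPoints F) :=
        Nat.card_le_card_of_injective (fun c => ⟨_, hfix c⟩) fun c c' h => Subtype.ext <| by
          simpa only [Function.extend_comp φ.injective] using
            congrArg (· ∘ φ) (congrArg Subtype.val h :)
    _ ≤ maxFixedPoints G' s := card_fixedPoints_le_maxFixedPoints hF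

theorem one_le_maxFixedPoints [Fintype V] [NeZero s] :
    1 ≤ maxFixedPoints G s := by
  simpa using pow_card_sub_card_le_maxFixedPoints (G := G) (s := s) id
    fun u v huv h => absurd h huv

theorem natCast_le_guessingNumber_iff [Fintype V] (hs : 1 < s) (k : ℕ) :
    (k : ℝ) ≤ guessingNumber G s ↔ s ^ k ≤ maxFixedPoints G s := by
  have : NeZero s := ⟨by omega⟩
  have hpos : (0 : ℝ) < maxFixedPoints G s := by exact_mod_cast one_le_maxFixedPoints
  rw [guessingNumber, Real.le_logb_iff_rpow_le (by exact_mod_cast hs) hpos, Real.rpow_natCast]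
  exact_mod_cast Iff.rfl

section VertexCover

variable {f : V → (V → Fin s) → Fin s} (hf : IsGuessingStrategy G s f) {k : ℕ} {w : Fin k → V}
  (hw : G.IsVertexCover (Set.range w))
include hf hw

theorem injective_comp_of_isVertexCover : Function.Injective fun c : FixedPoints f => c.1 ∘ w := by
  intro c c' h
  refine Subtype.ext (funext fun v => ?_)
  by_cases hv : v ∈ Set.range w
  · obtain ⟨i, rfl⟩ := hv
    exact congrFun h i
  · refine hf.eq_of_eqOn_neighbors fun u hu => ?_
    obtain ⟨i, rfl⟩ := (hw hu).resolve_left hv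
    exact congrFun h i

theorem card_fixedPoints_le_of_isVertexCover : Nat.card (FixedPoints f) ≤ s ^ k := by
  simpa using Nat.card_le_card_of_injective _ (injective_comp_of_isVertexCover hf hw)

theorem surjective_comp_of_isVertexCover (h : s ^ k ≤ Nat.card (FixedPoints f)) :
    Function.Surjective fun c : FixedPoints f => c.1 ∘ w :=
  ((injective_comp_of_isVertexCover hf hw).bijective_of_nat_card_le (by simpa using h)).2

end VertexCover

theorem not_surjective_fixedPoints_cycle (hs : 1 < s) {f : V → (V → Fin s) → Fin s}
    (hf : IsGuessingStrategy G s f) (v : Fin 5 → V)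
    (hv : ∀ i u, G.Adj (v i) u → u = v (i + 1) ∨ u = v (i - 1)) :
    ¬ Function.Surjective fun c : FixedPoints f => c.1 ∘ v ∘ ![1, 3, 4] := by
  intro hsurj
  choose C hC using fun a b d => hsurj ![a, b, d]
  have h1 a b d : (C a b d).1 (v 1) = a := congrFun (hC a b d) 0
  have h3 a b d : (C a b d).1 (v 3) = b := congrFun (hC a b d) 1
  have h4 a b d : (C a b d).1 (v 4) = d := congrFun (hC a b d) 2
  have agree : ∀ i (c c' : FixedPoints f), c.1 (v (i + 1)) = c'.1 (v (i + 1)) →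
      c.1 (v (i - 1)) = c'.1 (v (i - 1)) → c.1 (v i) = c'.1 (v i) :=
    fun i c c' hsucc hpred => hf.eq_of_eqOn_neighbors fun u hu => by
      rcases hv i u hu with rfl | rfl <;> assumption
  have hv0 a b b' d : (C a b d).1 (v 0) = (C a b' d).1 (v 0) :=
    agree 0 _ _ ((h1 ..).trans (h1 ..).symm) ((h4 ..).trans (h4 ..).symm)
  let z : Fin s := ⟨0, by omega⟩
  -- `v 4` sees only `v 3` and `v 0`, so with `v 3` frozen the colour of `v 0` determines `d`.
  have inj_d a : Function.Injective fun d => (C a z d).1 (v 0) := fun d d' h => by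
    simpa only [h4] using agree 4 (C a z d) (C a z d') h ((h3 ..).trans (h3 ..).symm)
  have inj_b a d : Function.Injective fun b => (C a b d).1 (v 2) := fun b b' h => by
    simpa only [h3] using agree 3 (C a b d) (C a b' d) ((h4 ..).trans (h4 ..).symm) h
  -- Hence, for a fixed colour of `v 1`, the neighbours `v 0`, `v 2` take every pair of colours.
  have hall a x y : ∃ b d, (C a b d).1 (v 0) = x ∧ (C a b d).1 (v 2) = y := by
    obtain ⟨d, hd⟩ := Finite.surjective_of_injective (inj_d a) x
    obtain ⟨b, hb⟩ := Finite.surjective_of_injective (inj_b a d) y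
    exact ⟨b, d, (hv0 a b z d).trans hd, hb⟩
  obtain ⟨b, d, h0, h2⟩ := hall z z z
  obtain ⟨b', d', h0', h2'⟩ := hall ⟨1, hs⟩ z z
  have h := agree 1 (C z b d) (C ⟨1, hs⟩ b' d') (h2.trans h2'.symm) (h0.trans h0'.symm)
  simp only [h1, Fin.ext_iff, z] at h
  omega

end GuessingGame

section CliqueLowerBounds

variable {V : Type*} [Finite V] {G : SimpleGraph V} {s : ℕ} [NeZero s]

theorem pow_three_le_maxFixedPoints_of_triangle_edge (x : Fin 5 ↪ V) (h₀₁ : G.Adj (x 0) (x 1))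
    (h₀₂ : G.Adj (x 0) (x 2)) (h₁₂ : G.Adj (x 1) (x 2)) (h₃₄ : G.Adj (x 3) (x 4)) :
    s ^ 3 ≤ maxFixedPoints G s := by
  refine le_trans ?_ (maxFixedPoints_le_of_embedding (Embedding.comap x G))
  refine pow_card_sub_card_le_maxFixedPoints (![0, 0, 0, 1, 1] : Fin 5 → Fin 2) ?_
  intro a b hab hp
  simp only [comap_adj]
  fin_cases a <;> fin_cases b <;> first | exact absurd hp (by decide) | exact absurd rfl hab | skip
  all_goals first | assumption | exact Adj.symm ‹_›

theorem pow_three_le_maxFixedPoints_of_three_edges (x : Fin 6 ↪ V) (h₀₁ : G.Adj (x 0) (x 1))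
    (h₂₃ : G.Adj (x 2) (x 3)) (h₄₅ : G.Adj (x 4) (x 5)) :
    s ^ 3 ≤ maxFixedPoints G s := by
  refine le_trans ?_ (maxFixedPoints_le_of_embedding (Embedding.comap x G))
  refine pow_card_sub_card_le_maxFixedPoints (![0, 0, 1, 1, 2, 2] : Fin 6 → Fin 3) ?_
  intro a b hab hp
  simp only [comap_adj]
  fin_cases a <;> fin_cases b <;> first | exact absurd hp (by decide) | exact absurd rfl hab | skip
  all_goals first | assumption | exact Adj.symm ‹_›

end CliqueLowerBounds

section Cycle

variable {V : Type*} {s : ℕ}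

theorem withIsolated_eq_map {k n : ℕ} (H : SimpleGraph (Fin k)) (h : k ≤ n) :
    withIsolated H n = H.map (Fin.castLEEmb h) := by
  ext u v
  simp only [withIsolated, fromRel_adj, map_adj]
  constructor
  · rintro ⟨-, ⟨hu, hv, hadj⟩ | ⟨hv, hu, hadj⟩⟩
    · exact ⟨_, _, hadj, rfl, rfl⟩
    · exact ⟨_, _, hadj.symm, rfl, rfl⟩
  · rintro ⟨a, b, hab, rfl, rfl⟩
    exact ⟨(Fin.castLEEmb h).injective.ne hab.ne, .inl ⟨a.2, b.2, hab⟩⟩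

theorem eq_add_one_or_eq_sub_one_of_map_cycleGraph_adj {n : ℕ} (ι : Fin (n + 2) ↪ V)
    (i : Fin (n + 2)) (u : V) (h : ((cycleGraph (n + 2)).map ι).Adj (ι i) u) :
    u = ι (i + 1) ∨ u = ι (i - 1) := by
  have hu : u ∈ ((cycleGraph (n + 2)).map ι).neighborSet (ι i) := h
  rw [neighborSet_map, cycleGraph_neighborSet] at hu
  obtain ⟨b, rfl | rfl, rfl⟩ := hu
  exacts [.inr rfl, .inl rfl]

theorem isVertexCover_cycleGraph_map (ι : Fin 5 ↪ V) :
    ((cycleGraph 5).map ι).IsVertexCover (Set.range (ι ∘ ![1, 3, 4])) := by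
  intro _ _ h
  obtain ⟨a, b, hab, rfl, rfl⟩ := (map_adj _ _ _ _).1 h
  have hcover : ∀ a b : Fin 5, (cycleGraph 5).Adj a b →
      (∃ j, ![1, 3, 4] j = a) ∨ ∃ j, ![1, 3, 4] j = b := by decide
  rcases hcover a b hab with ⟨j, rfl⟩ | ⟨j, rfl⟩
  · exact .inl ⟨j, rfl⟩
  · exact .inr ⟨j, rfl⟩

theorem maxFixedPoints_cycleGraph_map_lt [Finite V] (hs : 1 < s) (ι : Fin 5 ↪ V) :
    maxFixedPoints ((cycleGraph 5).map ι) s < s ^ 3 := by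
  have : NeZero s := ⟨by omega⟩
  obtain ⟨f, hf, hmax⟩ := exists_card_fixedPoints_eq_maxFixedPoints ((cycleGraph 5).map ι) s
  have hcover := isVertexCover_cycleGraph_map ι
  rw [← hmax]
  exact (card_fixedPoints_le_of_isVertexCover hf hcover).lt_of_ne fun h =>
    not_surjective_fixedPoints_cycle hs hf ι (eq_add_one_or_eq_sub_one_of_map_cycleGraph_adj ι)
      (surjective_comp_of_isVertexCover hf hcover h.ge)

section Saturation

variable [Finite V] [NeZero s] {G : SimpleGraph V} {ι : Fin 5 ↪ V}

theorem pow_three_le_of_cycleGraph_map_chord (hG : (cycleGraph 5).map ι ≤ G) (i : Fin 5)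
    (h : G.Adj (ι i) (ι (i + 2))) : s ^ 3 ≤ maxFixedPoints G s := by
  have hC : ∀ i : Fin 5, (cycleGraph 5).Adj (i + 0) (i + 1) ∧ (cycleGraph 5).Adj (i + 1) (i + 2) ∧
      (cycleGraph 5).Adj (i + 3) (i + 4) := by decide
  obtain ⟨h₀₁, h₁₂, h₃₄⟩ := hC i
  exact pow_three_le_maxFixedPoints_of_triangle_edge
    ⟨fun a => ι (i + a), ι.injective.comp (add_right_injective i)⟩
    (hG (map_adj_apply.2 h₀₁)) (by simpa using h) (hG (map_adj_apply.2 h₁₂))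
    (hG (map_adj_apply.2 h₃₄))

theorem pow_three_le_of_cycleGraph_map_pendant (hG : (cycleGraph 5).map ι ≤ G) (i : Fin 5) {w : V}
    (hw : w ∉ Set.range ι) (h : G.Adj (ι i) w) : s ^ 3 ≤ maxFixedPoints G s := by
  have hC : ∀ i : Fin 5,
      (cycleGraph 5).Adj (i + 1) (i + 2) ∧ (cycleGraph 5).Adj (i + 3) (i + 4) := by decide
  obtain ⟨h₁₂, h₃₄⟩ := hC i
  refine pow_three_le_maxFixedPoints_of_three_edges
    ⟨Fin.cons w fun a => ι (i + a), Fin.cons_injective_iff.2 ⟨?_, ?_⟩⟩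
    (by simpa using h.symm) (hG (map_adj_apply.2 h₁₂)) (hG (map_adj_apply.2 h₃₄))
  · rintro ⟨a, rfl⟩
    exact hw ⟨_, rfl⟩
  · exact ι.injective.comp (add_right_injective i)

theorem pow_three_le_of_cycleGraph_map_disjoint_edge (hG : (cycleGraph 5).map ι ≤ G) {u w : V}
    (hu : u ∉ Set.range ι) (hw : w ∉ Set.range ι) (h : G.Adj u w) :
    s ^ 3 ≤ maxFixedPoints G s := by
  refine pow_three_le_maxFixedPoints_of_three_edges
    ⟨Fin.cons u (Fin.cons w fun a : Fin 4 => ι a.castSucc), ?_⟩ h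
    (hG (map_adj_apply.2 (by decide))) (hG (map_adj_apply.2 (by decide)))
  have hrange : Set.range (fun a : Fin 4 => ι a.castSucc) ⊆ Set.range ι :=
    Set.range_comp_subset_range _ _
  simp only [Fin.cons_injective_iff, Fin.range_cons, Set.mem_insert_iff, not_or]
  exact ⟨⟨h.ne, fun h' => hu (hrange h')⟩, fun h' => hw (hrange h'),
    ι.injective.comp (Fin.castSucc_injective 4)⟩

end Saturation

theorem three_le_guessingNumber_cycleGraph_map_sup_edge [Fintype V] (hs : 1 < s) (ι : Fin 5 ↪ V)
    {u w : V} (huw : u ≠ w) (hadj : ¬((cycleGraph 5).map ι).Adj u w) :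
    3 ≤ guessingNumber ((cycleGraph 5).map ι ⊔ fromEdgeSet {s(u, w)}) s := by
  have : NeZero s := ⟨by omega⟩
  suffices s ^ 3 ≤ maxFixedPoints ((cycleGraph 5).map ι ⊔ fromEdgeSet {s(u, w)}) s by
    exact_mod_cast (natCast_le_guessingNumber_iff hs 3).2 this
  have hG : (cycleGraph 5).map ι ≤ (cycleGraph 5).map ι ⊔ fromEdgeSet {s(u, w)} := le_sup_left
  have hnew : ((cycleGraph 5).map ι ⊔ fromEdgeSet {s(u, w)}).Adj u w :=
    .inr ((fromEdgeSet_adj _).2 ⟨rfl, huw⟩)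
  by_cases hu : u ∈ Set.range ι <;> by_cases hw : w ∈ Set.range ι
  · obtain ⟨i, rfl⟩ := hu
    obtain ⟨j, rfl⟩ := hw
    have hchord : ∀ i j : Fin 5, i ≠ j → ¬(cycleGraph 5).Adj i j → j = i + 2 ∨ i = j + 2 := by
      decide
    rcases hchord i j (ι.injective.ne_iff.1 huw) (hadj ∘ map_adj_apply.2) with rfl | rfl
    · exact pow_three_le_of_cycleGraph_map_chord hG i hnew
    · exact pow_three_le_of_cycleGraph_map_chord hG j hnew.symm
  · obtain ⟨i, rfl⟩ := hu
    exact pow_three_le_of_cycleGraph_map_pendant hG i hw hnew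
  · obtain ⟨i, rfl⟩ := hw
    exact pow_three_le_of_cycleGraph_map_pendant hG i hu hnew.symm
  · exact pow_three_le_of_cycleGraph_map_disjoint_edge hG hu hw hnew

theorem guessingNumber_cycleGraph_map_lt_three [Fintype V] (hs : 1 < s) (ι : Fin 5 ↪ V) :
    guessingNumber ((cycleGraph 5).map ι) s < 3 := by
  have h :=
    (natCast_le_guessingNumber_iff hs 3).not.2 (maxFixedPoints_cycleGraph_map_lt hs ι).not_ge
  exact not_le.1 (by exact_mod_cast h)

theorem card_edgeSet_cycleGraph_map (ι : Fin 5 ↪ V) :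
    Nat.card ((cycleGraph 5).map ι).edgeSet = 5 := by
  rw [edgeSet_map, Nat.card_image_of_injective ι.sym2Map.injective, Nat.card_eq_fintype_card,
    ← edgeFinset_card]
  decide

end Cycle

/-- For `n ≥ 5` and `s ≥ 2`, the disjoint union of a 5-cycle with `n - 5`
isolated vertices is `(gn_s ≥ 3)`-saturated; consequently `sat(n, gn_s ≥ 3) ≤ 5`. -/
theorem satGN_three_le (n s : ℕ) (hn : 5 ≤ n) (hs : 2 ≤ s) :
    GNSaturated (withIsolated (SimpleGraph.cycleGraph 5) n) s 3 ∧
    satGN n s 3 ≤ 5 := by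
  rw [withIsolated_eq_map _ hn]
  have hsat : GNSaturated ((cycleGraph 5).map (Fin.castLEEmb hn)) s 3 :=
    ⟨guessingNumber_cycleGraph_map_lt_three hs _,
      fun _ _ huw hadj => three_le_guessingNumber_cycleGraph_map_sup_edge hs _ huw hadj⟩
  exact ⟨hsat, Nat.sInf_le ⟨_, hsat, (card_edgeSet_cycleGraph_map _).symm⟩⟩
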